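/- arXiv:2008.07250 — 3 statements merged into one kernel-verified Lean document; each statement's English description precedes it below -/
import Mathlib

section
/- Fix n ≥ 2. If two homothety classes x₁ and x₂ of R-lattices in K^n have equal prints, 𝒫(x₁) = 𝒫(x₂), then x₁ = x₂. -/
namespace LGR

open Pointwise
open scoped Classical

variable (R : Type*) [CommRing R] (K : Type*) [Field K] [Algebra R K]

instance : SMulCommClass K R K :=
  ⟨fun c r x => by simp only [Algebra.smul_def, smul_eq_mul]; ring⟩

variable (n : ℕ)

/-- An `R`-lattice in `K^n`. -/
def IsLattice (L : Submodule R (Fin n → K)) : Prop :=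
  L.FG ∧ Submodule.span K (L : Set (Fin n → K)) = ⊤

/-- Homothety of lattices. -/
def Homothetic (L L' : Submodule R (Fin n → K)) : Prop :=
  ∃ c : K, c ≠ 0 ∧ L' = c • L

/-- Adjacency of homothety classes. -/
def AdjacentL (π : R) (L M : Submodule R (Fin n → K)) : Prop :=
  ¬ Homothetic R K n L M ∧
  ∃ L₁ L₂ : Submodule R (Fin n → K), Homothetic R K n L L₁ ∧ Homothetic R K n M L₂ ∧
    (algebraMap R K π) • L₁ ≤ L₂ ∧ L₂ ≤ L₁

/-- The type of a lattice: residue mod `n` of `v (det M)`, for `M` a matrix whose columns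
form an `R`-basis of `L`. -/
noncomputable def typeOf (v : K → ℤ) (L : Submodule R (Fin n → K)) : ZMod n :=
  if h : Nonempty (Module.Basis (Fin n) R L) then
    ((v (Matrix.det (Matrix.of fun i j => (h.some j : Fin n → K) i)) : ℤ) : ZMod n)
  else 0

/-- `v` is the discrete valuation on `K` with valuation ring `R` and `v π = 1`. -/
def IsDVal (v : K → ℤ) (π : R) : Prop :=
  (∀ x y : K, x ≠ 0 → y ≠ 0 → v (x * y) = v x + v y) ∧
  v (algebraMap R K π) = 1 ∧
  ∀ x : K, x ≠ 0 → (0 ≤ v x ↔ ∃ r : R, algebraMap R K r = x)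

/-- The print of the homothety class of a lattice, as a homothety-saturated set of lattices. -/
def PrintS (v : K → ℤ) (π : R) (L : Submodule R (Fin n → K)) :
    Set (Submodule R (Fin n → K)) :=
  {M | IsLattice R K n M ∧ typeOf R K n v M = 0 ∧
    (Homothetic R K n M L ∨ AdjacentL R K n π M L)}

/-- The action of `SL_n(K)` on lattices. -/
noncomputable def mapLat (g : Matrix.SpecialLinearGroup (Fin n) K)
    (L : Submodule R (Fin n → K)) : Submodule R (Fin n → K) :=
  L.map (((Matrix.SpecialLinearGroup.toLin' g).toLinearMap).restrictScalars R)

/-!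
Let `d(L) ∈ ℤ` be the valuation of the determinant of an `R`-basis of `L` (`detVal`). Then
`τ(L) = d(L) mod n`, `d(cL) = d(L) + n v(c)`, and `M ⊆ L` implies `d(L) ≤ d(M)`, with equality
only if `M = L`. If `[M]` is adjacent to `[L]`, a representative `N` of `[M]` satisfies
`πN ⊆ L ⊆ N`, so `d(N) < d(L) < d(N) + n`. Hence two classes of type `0` are never adjacent,
and the print of a class of type `0` is that class alone.

If `τ(L) = r ≠ 0` and `f` is a basis of `L`, then for each `S` with `|S| = r` the lattice
spanned by the `f j` (`j ∈ S`) and the `π f j` (`j ∉ S`) is a neighbor of `L` of type `0`, and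
every `f j` lies in one of them. If the print of `[L]` were that of a class `[L']` of type `0`,
all these neighbors would be homothetic to `L'` with equal `d`, hence equal to each other, hence
equal to `L`, which they jointly contain. If `τ(L') ≠ 0` too, the representative `N` of such a
neighbor with `πN ⊆ L' ⊆ N` has `d(N) = n ⌊d(L')/n⌋`; this pins the scaling independently of
`S` and gives `π^m L ⊆ L'` with `m = ⌊d(L')/n⌋ - ⌊d(L)/n⌋`. By symmetry `π^(-m) L' ⊆ L`, and
comparing `d` gives `π^m L = L'`.
-/

theorem _root_.Int.eq_or_eq_add_of_dvd_of_le {m a b : ℤ} (hm : 0 < m) (ha : m ∣ a)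
    (hb : m ∣ b) (h₁ : a ≤ b) (h₂ : b ≤ a + m) : b = a ∨ b = a + m := by
  obtain ⟨e, rfl⟩ := ha
  obtain ⟨f, rfl⟩ := hb
  have : e ≤ f := le_of_mul_le_mul_left h₁ hm
  have : f ≤ e + 1 := le_of_mul_le_mul_left (by linarith) hm
  obtain rfl | rfl : f = e ∨ f = e + 1 := by omega
  · exact .inl rfl
  · exact .inr (by ring)

theorem _root_.Int.eq_mul_ediv_of_dvd_of_le {m a b : ℤ} (hm : 0 < m) (ha : m ∣ a)
    (hb : ¬ m ∣ b) (h₁ : a ≤ b) (h₂ : b ≤ a + m) : a = m * (b / m) := by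
  obtain ⟨e, rfl⟩ := ha
  have h₂' : b < m * e + m := h₂.lt_of_ne fun h => hb ⟨e + 1, by rw [h]; ring⟩
  rw [(Int.ediv_eq_iff_of_pos (y := e) hm).mpr
    ⟨by linarith [mul_comm e m], by linarith [mul_comm e m]⟩]

open Submodule

variable {R K n}

namespace IsDVal

variable {v : K → ℤ} {π : R}

theorem map_one (hv : IsDVal R K v π) : v 1 = 0 := by
  have := hv.1 1 1 one_ne_zero one_ne_zero
  rw [mul_one] at this
  omega

theorem map_inv (hv : IsDVal R K v π) {x : K} (hx : x ≠ 0) : v x⁻¹ = -v x := by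
  have := hv.1 x x⁻¹ hx (inv_ne_zero hx)
  rw [mul_inv_cancel₀ hx, hv.map_one] at this
  omega

theorem map_pow (hv : IsDVal R K v π) {x : K} (hx : x ≠ 0) (m : ℕ) : v (x ^ m) = m * v x := by
  induction m with
  | zero => simpa using hv.map_one
  | succ m ih => rw [pow_succ, hv.1 _ _ (pow_ne_zero _ hx) hx, ih]; push_cast; ring

theorem map_zpow (hv : IsDVal R K v π) {x : K} (hx : x ≠ 0) (k : ℤ) : v (x ^ k) = k * v x := by
  obtain ⟨m, rfl | rfl⟩ := Int.eq_nat_or_neg k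
  · simpa using hv.map_pow hx m
  · rw [zpow_neg, zpow_natCast, hv.map_inv (pow_ne_zero m hx), hv.map_pow hx]
    ring

theorem map_zpow_uniformizer (hv : IsDVal R K v π) (hπ : algebraMap R K π ≠ 0) (k : ℤ) :
    v (algebraMap R K π ^ k) = k := by
  rw [hv.map_zpow hπ, hv.2.1, mul_one]

theorem exists_isUnit_of_eq_zero [IsFractionRing R K] (hv : IsDVal R K v π) {c : K}
    (hc : c ≠ 0) (h : v c = 0) : ∃ r : R, IsUnit r ∧ algebraMap R K r = c := by
  obtain ⟨r, rfl⟩ := (hv.2.2 c hc).mp h.ge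
  obtain ⟨s, hs⟩ := (hv.2.2 _ (inv_ne_zero hc)).mp (by rw [hv.map_inv hc, h]; rfl)
  refine ⟨r, IsUnit.of_mul_eq_one s (IsFractionRing.injective R K ?_), rfl⟩
  rw [map_mul, hs, _root_.map_one, mul_inv_cancel₀ hc]

end IsDVal

section Matrix

variable {ι m : Type*} [Fintype ι]

theorem of_sum_smul_eq_map_mul (A : Matrix ι ι R) (g : ι → m → K) :
    Matrix.of (fun i => ∑ l, A i l • g l) = A.map (algebraMap R K) * Matrix.of g := by
  ext i j
  simp [Matrix.mul_apply, Finset.sum_apply, Algebra.smul_def]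

theorem exists_of_eq_map_mul_of_span_le {f g : ι → m → K}
    (h : span R (Set.range f) ≤ span R (Set.range g)) :
    ∃ A : Matrix ι ι R, Matrix.of f = A.map (algebraMap R K) * Matrix.of g := by
  choose A hA using fun i => (mem_span_range_iff_exists_fun R).mp (h (subset_span ⟨i, rfl⟩))
  exact ⟨Matrix.of A, by rw [← of_sum_smul_eq_map_mul]; simp_rw [Matrix.of_apply, hA]⟩

end Matrix

section Frame

variable {v : K → ℤ} {π : R} {ι : Type*} [Fintype ι] [DecidableEq ι] {f g : ι → ι → K}

theorem det_of_ne_zero (hf : LinearIndependent K f) : (Matrix.of f).det ≠ 0 :=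
  ((Matrix.isUnit_iff_isUnit_det _).mp (Matrix.linearIndependent_rows_iff_isUnit.mp hf)).ne_zero

theorem exists_v_det_eq_add_of_span_le (hv : IsDVal R K v π) (hf : LinearIndependent K f)
    (h : span R (Set.range f) ≤ span R (Set.range g)) :
    ∃ A : Matrix ι ι R, Matrix.of f = A.map (algebraMap R K) * Matrix.of g ∧ A.det ≠ 0 ∧
      v (Matrix.of f).det = v (algebraMap R K A.det) + v (Matrix.of g).det := by
  obtain ⟨A, hA⟩ := exists_of_eq_map_mul_of_span_le h
  have hdet : (Matrix.of f).det = algebraMap R K A.det * (Matrix.of g).det := by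
    rw [hA, Matrix.det_mul, RingHom.map_det]
    rfl
  have hne := det_of_ne_zero hf
  rw [hdet] at hne ⊢
  refine ⟨A, hA, fun h0 => ?_, hv.1 _ _ (left_ne_zero_of_mul hne) (right_ne_zero_of_mul hne)⟩
  simp [h0] at hne

theorem v_det_le_of_span_le [IsFractionRing R K] (hv : IsDVal R K v π)
    (hf : LinearIndependent K f)
    (h : span R (Set.range f) ≤ span R (Set.range g)) :
    v (Matrix.of g).det ≤ v (Matrix.of f).det := by
  obtain ⟨A, -, hA, hvA⟩ := exists_v_det_eq_add_of_span_le hv hf h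
  have := (hv.2.2 _ ((map_ne_zero_iff _ (IsFractionRing.injective R K)).mpr hA)).mpr ⟨_, rfl⟩
  omega

theorem span_eq_of_span_le_of_v_det_eq [IsFractionRing R K] (hv : IsDVal R K v π)
    (hf : LinearIndependent K f)
    (h : span R (Set.range f) ≤ span R (Set.range g))
    (hd : v (Matrix.of f).det = v (Matrix.of g).det) :
    span R (Set.range f) = span R (Set.range g) := by
  obtain ⟨A, hfA, hA, hvA⟩ := exists_v_det_eq_add_of_span_le hv hf h
  obtain ⟨r, hr, hrA⟩ := hv.exists_isUnit_of_eq_zero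
    ((map_ne_zero_iff _ (IsFractionRing.injective R K)).mpr hA) (by omega)
  rw [IsFractionRing.injective R K hrA] at hr
  have hg : Matrix.of g = Matrix.of (fun i => ∑ l, A⁻¹ i l • f l) := by
    rw [of_sum_smul_eq_map_mul, hfA, ← Matrix.mul_assoc, ← Matrix.map_mul,
      Matrix.nonsing_inv_mul _ hr, Matrix.map_one _ (map_zero _) (map_one _), Matrix.one_mul]
  refine h.antisymm (span_le.mpr ?_)
  rintro _ ⟨i, rfl⟩
  rw [show g i = ∑ l, A⁻¹ i l • f l from congrFun (Matrix.of.injective hg) i]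
  exact sum_mem fun l _ => smul_mem _ _ (subset_span ⟨l, rfl⟩)

end Frame

section DetVal

noncomputable def detVal (v : K → ℤ) (L : Submodule R (Fin n → K)) : ℤ :=
  if h : Nonempty (Module.Basis (Fin n) R L) then
    v (Matrix.of fun j => (h.some j : Fin n → K)).det
  else 0

theorem typeOf_eq_detVal (v : K → ℤ) (L : Submodule R (Fin n → K)) :
    typeOf R K n v L = detVal v L := by
  unfold typeOf detVal
  split_ifs
  · rw [← Matrix.det_transpose]
    rfl
  · simp

theorem typeOf_eq_zero_iff (v : K → ℤ) (L : Submodule R (Fin n → K)) :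
    typeOf R K n v L = 0 ↔ (n : ℤ) ∣ detVal v L := by
  rw [typeOf_eq_detVal, ZMod.intCast_zmod_eq_zero_iff_dvd]

end DetVal

section Lattice

variable {v : K → ℤ} {π : R} {L M : Submodule R (Fin n → K)} {f : Fin n → Fin n → K}

theorem span_range_coe_basis {ι : Type*} (b : Module.Basis ι R L) :
    span R (Set.range fun i => (b i : Fin n → K)) = L := by
  change span R (Set.range (L.subtype ∘ b)) = L
  rw [Set.range_comp, ← map_span, b.span_eq, Submodule.map_top, range_subtype]

theorem isLattice_span (hf : LinearIndependent K f) : IsLattice R K n (span R (Set.range f)) :=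
  ⟨fg_span (Set.finite_range f), by
    rw [span_span_of_tower]
    exact hf.span_eq_top_of_card_eq_finrank' (by simp)⟩

variable [IsFractionRing R K]

theorem linearIndependent_coe_basis {ι : Type*} (b : Module.Basis ι R L) :
    LinearIndependent K fun i => (b i : Fin n → K) :=
  (LinearIndependent.iff_fractionRing R K).mp (b.linearIndependent.map' L.subtype L.ker_subtype)

theorem detVal_span (hv : IsDVal R K v π) (hf : LinearIndependent K f) :
    detVal v (span R (Set.range f)) = v (Matrix.of f).det := by
  have hb : Nonempty (Module.Basis (Fin n) R (span R (Set.range f))) :=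
    ⟨.span ((LinearIndependent.iff_fractionRing R K).mpr hf)⟩
  rw [detVal, dif_pos hb]
  have hspan := span_range_coe_basis hb.some
  exact le_antisymm (v_det_le_of_span_le hv hf hspan.ge)
    (v_det_le_of_span_le hv (linearIndependent_coe_basis hb.some) hspan.le)

variable [IsDomain R] [IsPrincipalIdealRing R]

theorem IsLattice.exists_span_eq (hL : IsLattice R K n L) :
    ∃ f : Fin n → Fin n → K, LinearIndependent K f ∧ span R (Set.range f) = L := by
  have : Submodule.IsLattice K L := ⟨hL.1, hL.2⟩
  have : Module.IsTorsionFree R K :=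
    Module.isTorsionFree_iff_algebraMap_injective.mpr (IsFractionRing.injective R K)
  let b : Module.Basis (Fin n) R L :=
    Module.finBasisOfFinrankEq R L (by simpa using Submodule.IsLattice.finrank_of_pi K L)
  exact ⟨_, linearIndependent_coe_basis b, span_range_coe_basis b⟩

theorem detVal_le_of_le (hv : IsDVal R K v π) (hM : IsLattice R K n M) (hL : IsLattice R K n L)
    (h : M ≤ L) : detVal v L ≤ detVal v M := by
  obtain ⟨f, hf, rfl⟩ := hM.exists_span_eq
  obtain ⟨g, hg, rfl⟩ := hL.exists_span_eq
  rw [detVal_span hv hf, detVal_span hv hg]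
  exact v_det_le_of_span_le hv hf h

theorem eq_of_le_of_detVal_eq (hv : IsDVal R K v π) (hM : IsLattice R K n M)
    (hL : IsLattice R K n L) (h : M ≤ L) (hd : detVal v M = detVal v L) : M = L := by
  obtain ⟨f, hf, rfl⟩ := hM.exists_span_eq
  obtain ⟨g, hg, rfl⟩ := hL.exists_span_eq
  rw [detVal_span hv hf, detVal_span hv hg] at hd
  exact span_eq_of_span_le_of_v_det_eq hv hf h hd

theorem IsLattice.smul (hL : IsLattice R K n L) {c : K} (hc : c ≠ 0) :
    IsLattice R K n (c • L) := by
  obtain ⟨f, hf, rfl⟩ := hL.exists_span_eq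
  rw [smul_span, ← Set.range_smul]
  exact isLattice_span (f := fun i => c • f i) (hf.units_smul fun _ => Units.mk0 c hc)

theorem detVal_smul (hv : IsDVal R K v π) (hL : IsLattice R K n L) {c : K} (hc : c ≠ 0) :
    detVal v (c • L) = detVal v L + n * v c := by
  obtain ⟨f, hf, rfl⟩ := hL.exists_span_eq
  rw [smul_span, ← Set.range_smul, detVal_span hv hf,
    detVal_span hv (f := fun i => c • f i) (hf.units_smul fun _ => Units.mk0 c hc)]
  rw [show Matrix.of (fun i => c • f i) = c • Matrix.of f from rfl, Matrix.det_smul,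
    Fintype.card_fin, hv.1 _ _ (pow_ne_zero n hc) (det_of_ne_zero hf), hv.map_pow hc]
  ring

end Lattice

section Homothety

variable {v : K → ℤ} {π : R} {L M N : Submodule R (Fin n → K)}

theorem Homothetic.refl (L : Submodule R (Fin n → K)) : Homothetic R K n L L :=
  ⟨1, one_ne_zero, (one_smul K L).symm⟩

theorem Homothetic.symm (h : Homothetic R K n L M) : Homothetic R K n M L := by
  obtain ⟨c, hc, rfl⟩ := h
  exact ⟨c⁻¹, inv_ne_zero hc, (inv_smul_smul₀ hc L).symm⟩

theorem Homothetic.trans (h : Homothetic R K n L M) (h' : Homothetic R K n M N) :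
    Homothetic R K n L N := by
  obtain ⟨c, hc, rfl⟩ := h
  obtain ⟨c', hc', rfl⟩ := h'
  exact ⟨c' * c, mul_ne_zero hc' hc, (mul_smul c' c L).symm⟩

theorem self_mem_printS (hL : IsLattice R K n L) (hLd : (n : ℤ) ∣ detVal v L) :
    L ∈ PrintS R K n v π L :=
  ⟨hL, (typeOf_eq_zero_iff v L).mpr hLd, .inl (.refl L)⟩

theorem algebraMap_smul_eq_self {r : R} (hr : IsUnit r) (X : Submodule R (Fin n → K)) :
    algebraMap R K r • X = X := by
  have key : ∀ (u : Rˣ) (Y : Submodule R (Fin n → K)), algebraMap R K u • Y ≤ Y := by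
    intro u Y x hx
    obtain ⟨y, hy, rfl⟩ := (mem_smul_pointwise_iff_exists _ _ _).mp hx
    rw [algebraMap_smul]
    exact Y.smul_mem _ hy
  obtain ⟨u, rfl⟩ := hr
  refine (key u X).antisymm ?_
  calc X = algebraMap R K u • algebraMap R K ↑u⁻¹ • X := by
        rw [smul_smul, ← map_mul, Units.mul_inv, map_one, one_smul]
    _ ≤ algebraMap R K u • X := smul_mono_right _ (key u⁻¹ X)

variable [IsFractionRing R K]

theorem smul_eq_zpow_smul (hv : IsDVal R K v π) (hπ : algebraMap R K π ≠ 0) {c : K}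
    (hc : c ≠ 0) (L : Submodule R (Fin n → K)) : c • L = algebraMap R K π ^ v c • L := by
  have hpc : algebraMap R K π ^ (-v c) ≠ 0 := zpow_ne_zero _ hπ
  obtain ⟨r, hr, hrc⟩ := hv.exists_isUnit_of_eq_zero (mul_ne_zero hc hpc)
    (by rw [hv.1 _ _ hc hpc, hv.map_zpow_uniformizer hπ]; ring)
  have hc' : c = algebraMap R K r * algebraMap R K π ^ v c := by
    rw [hrc, mul_assoc, ← zpow_add₀ hπ, neg_add_cancel, zpow_zero, mul_one]
  calc c • L = algebraMap R K r • algebraMap R K π ^ v c • L := by rw [← mul_smul, ← hc']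
    _ = algebraMap R K π ^ v c • L := algebraMap_smul_eq_self hr _

variable [IsDomain R] [IsPrincipalIdealRing R]

theorem Homothetic.dvd_detVal_sub (hv : IsDVal R K v π) (h : Homothetic R K n L M)
    (hL : IsLattice R K n L) : (n : ℤ) ∣ detVal v M - detVal v L := by
  obtain ⟨c, hc, rfl⟩ := h
  rw [detVal_smul hv hL hc]
  exact ⟨v c, by ring⟩

theorem Homothetic.eq_of_detVal_eq (hv : IsDVal R K v π) (hπ : algebraMap R K π ≠ 0)
    (hn : 0 < n) (h : Homothetic R K n L M) (hL : IsLattice R K n L)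
    (hd : detVal v M = detVal v L) : L = M := by
  obtain ⟨c, hc, rfl⟩ := h
  rw [detVal_smul hv hL hc] at hd
  have hc₀ : v c = 0 := by simpa [hn.ne'] using hd
  rw [smul_eq_zpow_smul hv hπ hc, hc₀, zpow_zero, one_smul]

theorem detVal_zpow_smul (hv : IsDVal R K v π) (hπ : algebraMap R K π ≠ 0)
    (hL : IsLattice R K n L) (k : ℤ) :
    detVal v (algebraMap R K π ^ k • L) = detVal v L + n * k := by
  rw [detVal_smul hv hL (zpow_ne_zero k hπ), hv.map_zpow_uniformizer hπ]

end Homothety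

section Adjacency

variable [IsFractionRing R K] {v : K → ℤ} {π : R} {L M : Submodule R (Fin n → K)}

theorem AdjacentL.exists_zpow_smul_le (hv : IsDVal R K v π) (hπ : algebraMap R K π ≠ 0)
    (h : AdjacentL R K n π M L) :
    ∃ k : ℤ, algebraMap R K π ^ (k + 1) • M ≤ L ∧ L ≤ algebraMap R K π ^ k • M := by
  obtain ⟨-, _, _, ⟨a, ha, rfl⟩, ⟨b, hb, rfl⟩, hlow, hup⟩ := h
  have hk : algebraMap R K π ^ v (b⁻¹ * a) • M = b⁻¹ • a • M := by
    rw [← smul_eq_zpow_smul hv hπ (mul_ne_zero (inv_ne_zero hb) ha), mul_smul]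
  refine ⟨v (b⁻¹ * a), ?_, ?_⟩
  · calc algebraMap R K π ^ (v (b⁻¹ * a) + 1) • M
          = b⁻¹ • algebraMap R K π • a • M := by
          rw [zpow_add_one₀ hπ, mul_comm, mul_smul, hk, smul_smul, mul_comm, ← smul_smul]
      _ ≤ b⁻¹ • b • L := smul_mono_right _ hlow
      _ = L := inv_smul_smul₀ hb L
  · calc L = b⁻¹ • b • L := (inv_smul_smul₀ hb L).symm
      _ ≤ b⁻¹ • a • M := smul_mono_right _ hup
      _ = _ := hk.symm

variable [IsDomain R] [IsPrincipalIdealRing R]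

theorem not_adjacentL_of_dvd (hv : IsDVal R K v π) (hπ : algebraMap R K π ≠ 0) (hn : 0 < n)
    (hM : IsLattice R K n M) (hL : IsLattice R K n L) (hMd : (n : ℤ) ∣ detVal v M)
    (hLd : (n : ℤ) ∣ detVal v L) : ¬ AdjacentL R K n π M L := by
  intro h
  obtain ⟨k, hlow, hup⟩ := h.exists_zpow_smul_le hv hπ
  have hM₀ := hM.smul (zpow_ne_zero k hπ)
  have hM₁ := hM.smul (zpow_ne_zero (k + 1) hπ)
  have h₀ := detVal_le_of_le hv hL hM₀ hup
  have h₁ := detVal_le_of_le hv hM₁ hL hlow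
  rw [detVal_zpow_smul hv hπ hM] at h₀ h₁
  rcases Int.eq_or_eq_add_of_dvd_of_le (by exact_mod_cast hn) (dvd_add hMd (dvd_mul_right _ _))
    hLd h₀ (by linarith) with hd | hd
  · exact h.1 ⟨_, zpow_ne_zero k hπ,
      eq_of_le_of_detVal_eq hv hL hM₀ hup (by rw [hd, detVal_zpow_smul hv hπ hM])⟩
  · exact h.1 ⟨_, zpow_ne_zero (k + 1) hπ,
      (eq_of_le_of_detVal_eq hv hM₁ hL hlow
        (by rw [hd, detVal_zpow_smul hv hπ hM]; ring)).symm⟩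

theorem Homothetic.of_mem_printS_of_dvd (hv : IsDVal R K v π) (hπ : algebraMap R K π ≠ 0)
    (hn : 0 < n) (hL : IsLattice R K n L) (hLd : (n : ℤ) ∣ detVal v L)
    (hM : M ∈ PrintS R K n v π L) : Homothetic R K n M L := by
  obtain ⟨hMl, hMt, hhom | hadj⟩ := hM
  · exact hhom
  · exact absurd hadj
      (not_adjacentL_of_dvd hv hπ hn hMl hL ((typeOf_eq_zero_iff v M).mp hMt) hLd)

theorem exists_zpow_smul_le_of_mem_printS (hv : IsDVal R K v π) (hπ : algebraMap R K π ≠ 0)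
    (hn : 0 < n) (hL : IsLattice R K n L) (hLd : ¬ (n : ℤ) ∣ detVal v L)
    (hM : M ∈ PrintS R K n v π L) :
    ∃ k : ℤ, algebraMap R K π ^ (k + 1) • M ≤ L ∧
      detVal v M + n * k = n * (detVal v L / n) := by
  obtain ⟨hMl, hMt, hhom | hadj⟩ := hM
  · refine absurd ?_ hLd
    simpa using dvd_add (hhom.dvd_detVal_sub hv hMl) ((typeOf_eq_zero_iff v M).mp hMt)
  · obtain ⟨k, hlow, hup⟩ := hadj.exists_zpow_smul_le hv hπ
    have h₀ := detVal_le_of_le hv hL (hMl.smul (zpow_ne_zero k hπ)) hup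
    have h₁ := detVal_le_of_le hv (hMl.smul (zpow_ne_zero (k + 1) hπ)) hL hlow
    rw [detVal_zpow_smul hv hπ hMl] at h₀ h₁
    exact ⟨k, hlow, Int.eq_mul_ediv_of_dvd_of_le (by exact_mod_cast hn)
      (dvd_add ((typeOf_eq_zero_iff v M).mp hMt) (dvd_mul_right _ _)) hLd h₀ (by linarith)⟩

end Adjacency

section Neighbor

variable {v : K → ℤ} {π : R} {f : Fin n → Fin n → K} {S : Finset (Fin n)}

variable (π) in
def neighbor (f : Fin n → Fin n → K) (S : Finset (Fin n)) : Submodule R (Fin n → K) :=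
  span R (Set.range fun j => (if j ∈ S then 1 else algebraMap R K π) • f j)

theorem linearIndependent_ite_smul (hπ : algebraMap R K π ≠ 0) (hf : LinearIndependent K f) :
    LinearIndependent K fun j => (if j ∈ S then 1 else algebraMap R K π) • f j := by
  have hw : ∀ j, (if j ∈ S then 1 else algebraMap R K π) ≠ 0 := fun j => by
    split_ifs <;> simp [hπ]
  exact hf.units_smul fun j => Units.mk0 _ (hw j)

theorem isLattice_neighbor (hπ : algebraMap R K π ≠ 0) (hf : LinearIndependent K f) :
    IsLattice R K n (neighbor π f S) :=
  isLattice_span (linearIndependent_ite_smul hπ hf)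

theorem mem_neighbor {j : Fin n} (hj : j ∈ S) : f j ∈ neighbor π f S :=
  subset_span ⟨j, by simp [hj]⟩

theorem neighbor_le : neighbor π f S ≤ span R (Set.range f) := by
  refine span_le.mpr ?_
  rintro _ ⟨j, rfl⟩
  have hj : f j ∈ span R (Set.range f) := subset_span ⟨j, rfl⟩
  change (if j ∈ S then 1 else algebraMap R K π) • f j ∈ _
  split_ifs
  · simpa using hj
  · simpa [algebraMap_smul] using smul_mem _ π hj

theorem smul_span_le_neighbor : algebraMap R K π • span R (Set.range f) ≤ neighbor π f S := by
  rw [smul_span, ← Set.range_smul]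
  refine span_le.mpr ?_
  rintro _ ⟨j, rfl⟩
  by_cases hj : j ∈ S
  · simpa [algebraMap_smul] using smul_mem _ π (mem_neighbor (π := π) hj)
  · exact subset_span ⟨j, by simp [hj]⟩

theorem detVal_neighbor [IsFractionRing R K] (hv : IsDVal R K v π) (hπ : algebraMap R K π ≠ 0)
    (hf : LinearIndependent K f) :
    detVal v (neighbor π f S) = detVal v (span R (Set.range f)) + n - S.card := by
  rw [neighbor, detVal_span hv (linearIndependent_ite_smul hπ hf), detVal_span hv hf]
  have hmat : Matrix.of (fun j => (if j ∈ S then 1 else algebraMap R K π) • f j) =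
      Matrix.diagonal (fun j => if j ∈ S then 1 else algebraMap R K π) * Matrix.of f := by
    ext i j
    by_cases hi : i ∈ S <;> simp [Matrix.diagonal_mul, hi, Algebra.smul_def]
  have hprod :
      ∏ j, (if j ∈ S then 1 else algebraMap R K π) = algebraMap R K π ^ (n - S.card) := by
    simp [Finset.prod_ite, Finset.filter_not, Finset.card_sdiff_of_subset]
  rw [hmat, Matrix.det_mul, Matrix.det_diagonal, hprod,
    hv.1 _ _ (pow_ne_zero _ hπ) (det_of_ne_zero hf), hv.map_pow hπ, hv.2.1,
    Nat.cast_sub (by simpa using S.card_le_univ)]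
  ring

theorem smul_span_le_of_forall_neighbor_le {r : ℕ} (hr : 0 < r) (hrn : r ≤ n) {c : K}
    {X : Submodule R (Fin n → K)}
    (h : ∀ S : Finset (Fin n), S.card = r → c • neighbor π f S ≤ X) :
    c • span R (Set.range f) ≤ X := by
  rw [smul_span, ← Set.range_smul]
  refine span_le.mpr ?_
  rintro _ ⟨j, rfl⟩
  obtain ⟨S, hjS, -, hS⟩ := Finset.exists_subsuperset_card_eq (n := r) (Finset.subset_univ {j})
    (by rwa [Finset.card_singleton]) (by rwa [Finset.card_univ, Fintype.card_fin])
  exact h S hS (smul_mem_pointwise_smul _ _ _ (mem_neighbor (hjS (Finset.mem_singleton_self j))))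

variable [IsFractionRing R K] [IsDomain R] [IsPrincipalIdealRing R]

theorem adjacentL_neighbor (hv : IsDVal R K v π) (hπ : algebraMap R K π ≠ 0)
    (hf : LinearIndependent K f) (hS : 0 < S.card) (hSn : S.card < n) :
    AdjacentL R K n π (neighbor π f S) (span R (Set.range f)) := by
  refine ⟨fun h => ?_, _, _, .refl _, ⟨_, hπ, rfl⟩, smul_mono_right _ neighbor_le,
    smul_span_le_neighbor⟩
  have hdvd := h.dvd_detVal_sub hv (isLattice_neighbor hπ hf)
  rw [detVal_neighbor hv hπ hf, show ∀ a : ℤ, a - (a + n - S.card) = S.card - n by intro; ring,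
    dvd_sub_self_right, Int.natCast_dvd_natCast] at hdvd
  exact hS.ne' (Nat.eq_zero_of_dvd_of_lt hdvd hSn)

theorem neighbor_mem_printS (hv : IsDVal R K v π) (hπ : algebraMap R K π ≠ 0) (hn : 0 < n)
    (hf : LinearIndependent K f) (hd : ¬ (n : ℤ) ∣ detVal v (span R (Set.range f)))
    (hS : (S.card : ℤ) = detVal v (span R (Set.range f)) % n) :
    neighbor π f S ∈ PrintS R K n v π (span R (Set.range f)) := by
  have hr₀ := (Int.emod_pos_of_not_dvd hd).resolve_left (by omega)
  have hrn := Int.emod_lt_of_pos (detVal v (span R (Set.range f))) (by omega : (0 : ℤ) < n)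
  refine ⟨isLattice_neighbor hπ hf, (typeOf_eq_zero_iff v _).mpr ?_,
    .inr (adjacentL_neighbor hv hπ hf (by omega) (by omega))⟩
  rw [detVal_neighbor hv hπ hf, hS]
  exact ⟨detVal v (span R (Set.range f)) / n + 1, by
    linarith [Int.emod_add_mul_ediv (detVal v (span R (Set.range f))) n]⟩

end Neighbor

section Print

variable [IsDomain R] [IsPrincipalIdealRing R] [IsFractionRing R K]
  {v : K → ℤ} {π : R} {L₁ L₂ : Submodule R (Fin n → K)}

theorem zpow_smul_le_of_printS_subset (hv : IsDVal R K v π) (hπ : algebraMap R K π ≠ 0)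
    (hn : 0 < n) (h₁ : IsLattice R K n L₁) (h₂ : IsLattice R K n L₂)
    (hd₁ : ¬ (n : ℤ) ∣ detVal v L₁) (hd₂ : ¬ (n : ℤ) ∣ detVal v L₂)
    (hsub : PrintS R K n v π L₂ ⊆ PrintS R K n v π L₁) :
    algebraMap R K π ^ (detVal v L₁ / n - detVal v L₂ / n) • L₂ ≤ L₁ := by
  obtain ⟨f, hf, rfl⟩ := h₂.exists_span_eq
  set r := detVal v (span R (Set.range f)) % n
  have hr₀ : 0 < r := (Int.emod_pos_of_not_dvd hd₂).resolve_left (by omega)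
  have hrn : r < n := Int.emod_lt_of_pos _ (by omega)
  refine smul_span_le_of_forall_neighbor_le (π := π) (r := r.toNat) (by omega) (by omega)
    fun S hS => ?_
  obtain ⟨k, hk, hdk⟩ := exists_zpow_smul_le_of_mem_printS hv hπ hn h₁ hd₁
    (hsub (neighbor_mem_printS (S := S) hv hπ hn hf hd₂ (by omega)))
  rw [detVal_neighbor hv hπ hf, hS] at hdk
  have hk₁ : k + 1 = detVal v L₁ / n - detVal v (span R (Set.range f)) / n := by
    refine mul_left_cancel₀ (by exact_mod_cast hn.ne' : (n : ℤ) ≠ 0) ?_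
    linarith [Int.emod_add_mul_ediv (detVal v (span R (Set.range f))) n,
      Int.toNat_of_nonneg hr₀.le]
  rwa [← hk₁]

theorem not_printS_subset_of_dvd (hv : IsDVal R K v π) (hπ : algebraMap R K π ≠ 0)
    (hn : 0 < n) (h₁ : IsLattice R K n L₁) (h₂ : IsLattice R K n L₂)
    (hd₁ : (n : ℤ) ∣ detVal v L₁) (hd₂ : ¬ (n : ℤ) ∣ detVal v L₂) :
    ¬ PrintS R K n v π L₂ ⊆ PrintS R K n v π L₁ := by
  intro hsub
  obtain ⟨f, hf, rfl⟩ := h₂.exists_span_eq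
  set r := detVal v (span R (Set.range f)) % n
  have hr₀ : 0 < r := (Int.emod_pos_of_not_dvd hd₂).resolve_left (by omega)
  have hrn : r < n := Int.emod_lt_of_pos _ (by omega)
  have hhom : ∀ S : Finset (Fin n), S.card = r.toNat →
      Homothetic R K n (neighbor π f S) L₁ :=
    fun S hS => .of_mem_printS_of_dvd hv hπ hn h₁ hd₁
      (hsub (neighbor_mem_printS (S := S) hv hπ hn hf hd₂ (by omega)))
  obtain ⟨S₀, -, hS₀⟩ := Finset.exists_subset_card_eq (s := (Finset.univ : Finset (Fin n)))
    (n := r.toNat) (by simp; omega)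
  have heq : ∀ S : Finset (Fin n), S.card = r.toNat → neighbor π f S = neighbor π f S₀ :=
    fun S hS => ((hhom S hS).trans (hhom S₀ hS₀).symm).eq_of_detVal_eq hv hπ hn
      (isLattice_neighbor hπ hf)
      (by rw [detVal_neighbor hv hπ hf, detVal_neighbor hv hπ hf, hS, hS₀])
  have hle : span R (Set.range f) ≤ neighbor π f S₀ := by
    simpa using smul_span_le_of_forall_neighbor_le (π := π) (c := (1 : K)) (r := r.toNat)
      (by omega) (by omega) fun S hS => by rw [one_smul, heq S hS]
  have hd := congrArg (detVal v) (neighbor_le.antisymm hle)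
  rw [detVal_neighbor hv hπ hf, hS₀] at hd
  omega

theorem homothetic_of_printS_eq_of_not_dvd (hv : IsDVal R K v π) (hπ : algebraMap R K π ≠ 0)
    (hn : 0 < n) (h₁ : IsLattice R K n L₁) (h₂ : IsLattice R K n L₂)
    (hd₁ : ¬ (n : ℤ) ∣ detVal v L₁) (hd₂ : ¬ (n : ℤ) ∣ detVal v L₂)
    (hP : PrintS R K n v π L₁ = PrintS R K n v π L₂) : Homothetic R K n L₁ L₂ := by
  set m := detVal v L₁ / n - detVal v L₂ / n
  have h₂₁ := zpow_smul_le_of_printS_subset hv hπ hn h₁ h₂ hd₁ hd₂ hP.ge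
  have h₁₂ := zpow_smul_le_of_printS_subset hv hπ hn h₂ h₁ hd₂ hd₁ hP.le
  have hL₂ := h₂.smul (zpow_ne_zero m hπ)
  have e₁ := detVal_le_of_le hv hL₂ h₁ h₂₁
  have e₂ := detVal_le_of_le hv (h₁.smul (zpow_ne_zero _ hπ)) h₂ h₁₂
  rw [detVal_zpow_smul hv hπ h₂] at e₁
  rw [detVal_zpow_smul hv hπ h₁] at e₂
  refine Homothetic.symm
    ⟨_, zpow_ne_zero m hπ, (eq_of_le_of_detVal_eq hv hL₂ h₁ h₂₁ ?_).symm⟩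
  rw [detVal_zpow_smul hv hπ h₂]
  linarith

end Print

/-- If two homothety classes of `R`-lattices in `K^n` have equal prints,
then they are equal (i.e. the lattices are homothetic). -/
theorem prints_determine_vertex
    {R : Type*} [CommRing R] [IsDomain R] [IsDiscreteValuationRing R]
    {K : Type*} [Field K] [Algebra R K] [IsFractionRing R K]
    (n : ℕ) (hn : 2 ≤ n)
    (π : R) (hπ : Ideal.span {π} = IsLocalRing.maximalIdeal R)
    (v : K → ℤ) (hv : IsDVal R K v π)
    (L₁ L₂ : Submodule R (Fin n → K))
    (h₁ : IsLattice R K n L₁) (h₂ : IsLattice R K n L₂)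
    (hP : PrintS R K n v π L₁ = PrintS R K n v π L₂) :
    Homothetic R K n L₁ L₂ := by
  have hπ₀ : algebraMap R K π ≠ 0 := by
    refine (map_ne_zero_iff _ (IsFractionRing.injective R K)).mpr fun h => ?_
    exact IsDiscreteValuationRing.not_a_field R (by rw [← hπ, h, Ideal.span_singleton_eq_bot])
  have hn₀ : 0 < n := by omega
  by_cases hd₁ : (n : ℤ) ∣ detVal v L₁ <;> by_cases hd₂ : (n : ℤ) ∣ detVal v L₂
  · exact (Homothetic.of_mem_printS_of_dvd hv hπ₀ hn₀ h₁ hd₁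
      (hP ▸ self_mem_printS h₂ hd₂)).symm
  · exact absurd hP.ge (not_printS_subset_of_dvd hv hπ₀ hn₀ h₁ h₂ hd₁ hd₂)
  · exact absurd hP.le (not_printS_subset_of_dvd hv hπ₀ hn₀ h₂ h₁ hd₂ hd₁)
  · exact homothetic_of_printS_eq_of_not_dvd hv hπ₀ hn₀ h₁ h₂ hd₁ hd₂ hP

end LGR
end

section
/- Let Λ be a torsion-free group equipped with a left-invariant metric d_Λ all of whose balls are finite, acting by isometries on a metric space (X, d_X). Let q : Λ → X be an equivariant map, i.e. q(gλ) = g·q(λ) for all g, λ ∈ Λ, and suppose there exist constants L ≥ 1 and ε ≥ 0 such that d_Λ(a, b) ≤ L·d_X(q(a), q(b)) + ε for all a, b ∈ Λ. Then q is injective. -/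
/-!
If `q a = q b` with `a ≠ b`, then `g = b * a⁻¹` fixes `q a`, so by equivariance `q` is constant
on the orbit `{gⁿ * a}`. The coarse lower bound then puts this orbit in the `ε`-ball around `a`,
which is finite, whereas torsion-freeness makes `n ↦ gⁿ * a` injective.
-/

def Monoid.IsTorsionFree (G : Type*) [Monoid G] : Prop :=
  ∀ g : G, g ≠ 1 → ¬IsOfFinOrder g

theorem Monoid.IsTorsionFree.injective_zpow {G : Type*} [Group G] (htf : Monoid.IsTorsionFree G)
    {g : G} (hg : g ≠ 1) : Function.Injective (fun n : ℤ => g ^ n) :=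
  injective_zpow_iff_not_isOfFinOrder.mpr (htf g hg)

theorem finite_closedBall_of_dist_mul_left {G : Type*} [Group G] [MetricSpace G]
    (hleft : ∀ g a b : G, dist (g * a) (g * b) = dist a b)
    (hballs : ∀ r : ℝ, {g : G | dist g (1 : G) ≤ r}.Finite) (x : G) (r : ℝ) :
    (Metric.closedBall x r).Finite := by
  refine ((hballs r).image (x * ·)).subset fun y hy => ⟨x⁻¹ * y, ?_, mul_inv_cancel_left x y⟩
  have hdist : dist (x⁻¹ * y) (x⁻¹ * x) = dist y x := hleft x⁻¹ y x
  rw [inv_mul_cancel] at hdist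
  exact hdist.trans_le hy

theorem equivariant_zpow_mul_inv_mul_eq {G X : Type*} [Group G] [MulAction G X] {q : G → X}
    (hequiv : ∀ g l : G, q (g * l) = g • q l) {a b : G} (hab : q a = q b) (n : ℤ) :
    q ((b * a⁻¹) ^ n * a) = q a := by
  have hfix : b * a⁻¹ ∈ MulAction.stabilizer G (q a) := by
    change (b * a⁻¹) • q a = q a
    rw [← hequiv, inv_mul_cancel_right, hab]
  rw [hequiv]
  exact Subgroup.zpow_mem _ hfix n

theorem equivariant_coarse_embedding_injective_general
    {Λ : Type*} [Group Λ] [MetricSpace Λ]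
    (hleft : ∀ g a b : Λ, dist (g * a) (g * b) = dist a b)
    (hballs : ∀ r : ℝ, {g : Λ | dist g (1 : Λ) ≤ r}.Finite)
    (htf : Monoid.IsTorsionFree Λ)
    {X : Type*} [MetricSpace X] [MulAction Λ X]
    (q : Λ → X) (hequiv : ∀ g l : Λ, q (g * l) = g • q l)
    (L ε : ℝ)
    (hq : ∀ a b : Λ, (dist a b : ℝ) ≤ L * dist (q a) (q b) + ε) :
    Function.Injective q := by
  intro a b hab
  by_contra hne
  have hg : b * a⁻¹ ≠ 1 := fun h => hne (mul_inv_eq_one.mp h).symm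
  have horbit_inj : Function.Injective (fun n : ℤ => (b * a⁻¹) ^ n * a) :=
    (mul_left_injective a).comp (htf.injective_zpow hg)
  have horbit_sub : Set.range (fun n : ℤ => (b * a⁻¹) ^ n * a) ⊆ Metric.closedBall a ε := by
    rintro _ ⟨n, rfl⟩
    have hdist := hq ((b * a⁻¹) ^ n * a) a
    rwa [equivariant_zpow_mul_inv_mul_eq hequiv hab n, dist_self, mul_zero, zero_add] at hdist
  exact Set.infinite_range_of_injective horbit_inj
    ((finite_closedBall_of_dist_mul_left hleft hballs a ε).subset horbit_sub)

/-- A torsion-free group with a left-invariant metric with finite balls,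
acting by isometries on a metric space, admits no non-injective equivariant map `q`
satisfying `d_Λ(a,b) ≤ L·d_X(q a, q b) + ε`. -/
theorem equivariant_coarse_embedding_injective
    {Λ : Type*} [Group Λ] [MetricSpace Λ]
    (hleft : ∀ g a b : Λ, dist (g * a) (g * b) = dist a b)
    (hballs : ∀ r : ℝ, {g : Λ | dist g (1 : Λ) ≤ r}.Finite)
    (htf : Monoid.IsTorsionFree Λ)
    {X : Type*} [MetricSpace X] [MulAction Λ X]
    (hiso : ∀ (g : Λ) (x y : X), dist (g • x) (g • y) = dist x y)
    (q : Λ → X) (hequiv : ∀ g l : Λ, q (g * l) = g • q l)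
    (L ε : ℝ) (hL : 1 ≤ L) (hε : 0 ≤ ε)
    (hq : ∀ a b : Λ, (dist a b : ℝ) ≤ L * dist (q a) (q b) + ε) :
    Function.Injective q :=
  equivariant_coarse_embedding_injective_general hleft hballs htf q hequiv L ε hq
end

section
/- Let X and Y be connected graphs, let r > 0, let r_A and R satisfy 3r < r_A and r_A + 1 ≤ R, and let H₀ be a subgroup of Isom(X). For each vertex y of Y let f_y be an isometry from the ball B_Y(y, R) onto the ball B_X(f_y(y), R). Assume that for all adjacent vertices y, z of Y there exists a ∈ H₀ such that f_y(w) = a(f_z(w)) for all w ∈ B_Y(z, r_A). Then for all vertices y, z of Y with d_Y(y, z) ≤ 2r there exists a ∈ H₀ such that f_y(w) = a(f_z(w)) for all w ∈ B_Y(z, r). -/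
namespace LGR

/-- `f` is an isometry from the ball `B_G(x, Rr)` onto the ball `B_H(y, Rr)`. -/
def IsBallIsom {V W : Type} (G : SimpleGraph V) (H : SimpleGraph W)
    (x : V) (y : W) (Rr : ℕ) (f : V → W) : Prop :=
  (∀ v, G.dist x v ≤ Rr → H.dist y (f v) ≤ Rr) ∧
  (∀ w, H.dist y w ≤ Rr → ∃ v, G.dist x v ≤ Rr ∧ f v = w) ∧
  (∀ a b, G.dist x a ≤ Rr → G.dist x b ≤ Rr → f a = f b → a = b) ∧
  (∀ a b, G.dist x a ≤ Rr → G.dist x b ≤ Rr → H.dist (f a) (f b) = G.dist a b)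

/-- `Y` is `Rr`-locally `X`: every ball of radius `Rr` in `Y` is isometric to a ball of
radius `Rr` in `X`. -/
def RLocally {W V : Type} (Y : SimpleGraph W) (X : SimpleGraph V) (Rr : ℕ) : Prop :=
  ∀ y : W, ∃ (x : V) (f : W → V), IsBallIsom Y X y x Rr f

/-- A covering of `Y` by `X`. -/
def IsCovering {V W : Type} (X : SimpleGraph V) (Y : SimpleGraph W) (p : V → W) : Prop :=
  Function.Surjective p ∧ (∀ a b, X.Adj a b → Y.Adj (p a) (p b)) ∧
  ∀ v, Set.BijOn p (X.neighborSet v) (Y.neighborSet (p v))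

/-- `X` is SLG-rigid at scale `(r, Rr)`. -/
def SLGRigidAt {V : Type} (X : SimpleGraph V) (r Rr : ℕ) : Prop :=
  ∀ (W : Type) (Y : SimpleGraph W), Y.Connected → (∀ w, (Y.neighborSet w).Finite) →
    RLocally Y X Rr →
    ∀ (x : V) (y : W) (f : V → W), IsBallIsom X Y x y Rr f →
      ∃ p : V → W, IsCovering X Y p ∧ ∀ v, X.dist x v ≤ r → p v = f v

/-- `X` is SLG-rigid. -/
def SLGRigid {V : Type} (X : SimpleGraph V) : Prop :=
  ∃ r Rr : ℕ, 0 < r ∧ r < Rr ∧ SLGRigidAt X r Rr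

/-- The isometry group of a graph: distance-preserving bijections of the vertex set. -/
def IsomGroup {V : Type} (G : SimpleGraph V) : Subgroup (Equiv.Perm V) where
  carrier := {e | ∀ a b, G.dist (e a) (e b) = G.dist a b}
  one_mem' := fun _ _ => rfl
  mul_mem' := by
    intro e f he hf a b
    simpa [Equiv.Perm.mul_apply] using (he (f a) (f b)).trans (hf a b)
  inv_mem' := by
    intro e he a b
    have h := he (e⁻¹ a) (e⁻¹ b)
    simpa using h.symm

/-- Quasi-isometries between graphs. -/
def IsQuasiIsometry {V W : Type} (G : SimpleGraph V) (H : SimpleGraph W) (q : V → W) : Prop :=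
  ∃ L ε : ℝ, 1 ≤ L ∧ 0 ≤ ε ∧
    (∀ a b : V, L⁻¹ * (G.dist a b : ℝ) - ε ≤ (H.dist (q a) (q b) : ℝ) ∧
       (H.dist (q a) (q b) : ℝ) ≤ L * (G.dist a b : ℝ) + ε) ∧
    (∀ w : W, ∃ a : V, (H.dist (q a) w : ℝ) ≤ ε)

/-- The Cayley graph of a group with respect to a symmetric generating set. -/
def cayley (G : Type) [Group G] (S : Set G) (hSsym : ∀ s ∈ S, s⁻¹ ∈ S) (hS1 : (1 : G) ∉ S) :
    SimpleGraph G where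
  Adj a b := a⁻¹ * b ∈ S
  symm := by
    constructor
    intro a b h
    have := hSsym _ h
    simpa [mul_inv_rev] using this
  loopless := by
    constructor
    intro a h
    simp only [inv_mul_cancel] at h
    exact hS1 h

/-! Compose the neighbour transitions along a geodesic from `y` to `z`: the ball on which each
new factor must act grows by one per step, so `2r` steps starting from radius `r` stay inside
radius `3r ≤ r_A`. -/

section Transition

variable {V W : Type} {Y : SimpleGraph W} {H₀ : Subgroup (Equiv.Perm V)} {f : W → W → V}

def HasTransitionOn (Y : SimpleGraph W) (H₀ : Subgroup (Equiv.Perm V)) (f : W → W → V)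
    (ρ : ℕ) (y z : W) : Prop :=
  ∃ a ∈ H₀, ∀ w : W, Y.dist z w ≤ ρ → f y w = (a : Equiv.Perm V) (f z w)

theorem hasTransitionOn_self (ρ : ℕ) (y : W) : HasTransitionOn Y H₀ f ρ y y :=
  ⟨1, one_mem H₀, fun _ _ => rfl⟩

theorem HasTransitionOn.trans {ρ₁ ρ₂ : ℕ} {y b z : W} (h₁ : HasTransitionOn Y H₀ f ρ₁ y b)
    (h₂ : HasTransitionOn Y H₀ f ρ₂ b z) (hball : ∀ w, Y.dist z w ≤ ρ₂ → Y.dist b w ≤ ρ₁) :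
    HasTransitionOn Y H₀ f ρ₂ y z := by
  obtain ⟨a₁, ha₁, hya₁⟩ := h₁
  obtain ⟨a₂, ha₂, hba₂⟩ := h₂
  refine ⟨a₁ * a₂, mul_mem ha₁ ha₂, fun w hw => ?_⟩
  rw [hya₁ w (hball w hw), hba₂ w hw, Equiv.Perm.mul_apply]

theorem hasTransitionOn_of_walk {rA : ℕ}
    (hadj : ∀ y z, Y.Adj y z → HasTransitionOn Y H₀ f rA y z) :
    ∀ {y z : W} (p : Y.Walk y z) {ρ : ℕ}, p.length + ρ ≤ rA + 1 → HasTransitionOn Y H₀ f ρ y z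
  | _, _, .nil, ρ, _ => hasTransitionOn_self ρ _
  | y, z, .cons (v := b) hyb q, ρ, hlen => by
    rw [SimpleGraph.Walk.length_cons] at hlen
    refine (hadj y b hyb).trans (hasTransitionOn_of_walk hadj q (by omega)) fun w hw => ?_
    calc Y.dist b w ≤ Y.dist b z + Y.dist z w := q.reachable.dist_triangle_left w
      _ ≤ q.length + ρ := add_le_add (SimpleGraph.dist_le q) hw
      _ ≤ rA := by omega

theorem hasTransitionOn_of_dist_add_le (hY : Y.Connected) {rA ρ : ℕ}
    (hadj : ∀ y z, Y.Adj y z → HasTransitionOn Y H₀ f rA y z) {y z : W}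
    (hyz : Y.dist y z + ρ ≤ rA + 1) : HasTransitionOn Y H₀ f ρ y z := by
  obtain ⟨p, hp⟩ := hY.exists_walk_length_eq_dist y z
  exact hasTransitionOn_of_walk hadj p (hp ▸ hyz)

end Transition

theorem atlas_transition_maps_general
    {V W : Type} (Y : SimpleGraph W)
    (hY : Y.Connected)
    (r rA : ℕ) (hrA : 3 * r < rA)
    (H₀ : Subgroup (Equiv.Perm V))
    (f : W → W → V)
    (hadj : ∀ y z : W, Y.Adj y z →
      ∃ a ∈ H₀, ∀ w : W, Y.dist z w ≤ rA → f y w = (a : Equiv.Perm V) (f z w)) :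
    ∀ y z : W, Y.dist y z ≤ 2 * r →
      ∃ a ∈ H₀, ∀ w : W, Y.dist z w ≤ r → f y w = (a : Equiv.Perm V) (f z w) :=
  fun _ _ hyz => hasTransitionOn_of_dist_add_le hY hadj (by omega)

/-- If an atlas of ball isometries from `Y` to `X` has transition maps in
`H₀` for neighbouring centers (at radius `r_A`), then it has transition maps in `H₀` for
centers at distance at most `2r` (at radius `r`), provided `3r < r_A` and `r_A + 1 ≤ R`. -/
theorem atlas_transition_maps
    {V W : Type} (X : SimpleGraph V) (Y : SimpleGraph W)
    (hX : X.Connected) (hY : Y.Connected)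
    (r rA Rr : ℕ) (hr : 0 < r) (hrA : 3 * r < rA) (hR : rA + 1 ≤ Rr)
    (H₀ : Subgroup (Equiv.Perm V)) (hH₀ : H₀ ≤ IsomGroup X)
    (f : W → W → V)
    (hf : ∀ y : W, IsBallIsom Y X y (f y y) Rr (f y))
    (hadj : ∀ y z : W, Y.Adj y z →
      ∃ a ∈ H₀, ∀ w : W, Y.dist z w ≤ rA → f y w = (a : Equiv.Perm V) (f z w)) :
    ∀ y z : W, Y.dist y z ≤ 2 * r →
      ∃ a ∈ H₀, ∀ w : W, Y.dist z w ≤ r → f y w = (a : Equiv.Perm V) (f z w) :=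
  atlas_transition_maps_general Y hY r rA hrA H₀ f hadj

end LGR
end
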